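/- Under the permutation null distribution, for all integers 0 ≤ t1 < t2 ≤ n, the expectation of U_w^π(t1,t2) equals n(t2 − t1 − 1)(n − t2 + t1 − 1)·r0/(n−2), and the expectation of U_diff^π(t1,t2) equals (n−1)(2(t2 − t1) − n)·r0. -/

import Mathlib

/-!
For a uniformly random permutation `π` and fixed indices `k ≠ l`, the pair `(π k, π l)` is
uniformly distributed over ordered pairs of distinct points (permutations act transitively on
them), so, `R` having zero diagonal, `𝔼 R (π k) (π l) = ∑ R / (n (n - 1)) = r0`. By linearity a
sum of `R (π i) (π j)` over `i, j` in a block of `m` indices has expectation `m (m - 1) r0`.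
`U1` and `U2` are such sums over the window `t1 < i ≤ t2` of size `t2 - t1` and over its
complement of size `n - t2 + t1`, and both claimed formulas are polynomial identities in these
two sizes.
-/

open Finset

namespace RING

/-- `U1^π(t1,t2)`: sum of `R (π i) (π j)` over indices (1-based `i,j ∈ {1,…,n}`,
represented by `Fin n` with `i` standing for index `i+1`) with `t1 < i ≤ t2` and
`t1 < j ≤ t2`. -/
noncomputable def U1 (n : ℕ) (R : Fin n → Fin n → ℝ) (π : Equiv.Perm (Fin n))
    (t1 t2 : ℕ) : ℝ :=
  ∑ i : Fin n, ∑ j : Fin n,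
    if t1 ≤ (i : ℕ) ∧ (i : ℕ) < t2 ∧ t1 ≤ (j : ℕ) ∧ (j : ℕ) < t2 then R (π i) (π j) else 0

/-- `U2^π(t1,t2)`: sum of `R (π i) (π j)` over indices with `i ≤ t1` or `i > t2`,
and `j ≤ t1` or `j > t2`. -/
noncomputable def U2 (n : ℕ) (R : Fin n → Fin n → ℝ) (π : Equiv.Perm (Fin n))
    (t1 t2 : ℕ) : ℝ :=
  ∑ i : Fin n, ∑ j : Fin n,
    if ((i : ℕ) < t1 ∨ t2 ≤ (i : ℕ)) ∧ ((j : ℕ) < t1 ∨ t2 ≤ (j : ℕ)) then R (π i) (π j) else 0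

/-- Expectation under the permutation null distribution (uniform over all `n!`
permutations). -/
noncomputable def pexp (n : ℕ) (f : Equiv.Perm (Fin n) → ℝ) : ℝ :=
  (∑ π : Equiv.Perm (Fin n), f π) / (Nat.factorial n)

/-- Variance under the permutation null distribution. -/
noncomputable def pvar (n : ℕ) (f : Equiv.Perm (Fin n) → ℝ) : ℝ :=
  pexp n (fun π => (f π - pexp n f) ^ 2)

/-- Covariance under the permutation null distribution. -/
noncomputable def pcov (n : ℕ) (f g : Equiv.Perm (Fin n) → ℝ) : ℝ :=
  pexp n (fun π => (f π - pexp n f) * (g π - pexp n g))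

/-- `R̄_{i·} = (Σ_j R_{ij})/(n-1)`. -/
noncomputable def Rbar (n : ℕ) (R : Fin n → Fin n → ℝ) (i : Fin n) : ℝ :=
  (∑ j : Fin n, R i j) / ((n : ℝ) - 1)

/-- `r0 = (1/n) Σ_i R̄_{i·}`. -/
noncomputable def r0 (n : ℕ) (R : Fin n → Fin n → ℝ) : ℝ :=
  (∑ i : Fin n, Rbar n R i) / n

/-- `r1² = (1/n) Σ_i R̄_{i·}²`. -/
noncomputable def r1sq (n : ℕ) (R : Fin n → Fin n → ℝ) : ℝ :=
  (∑ i : Fin n, (Rbar n R i) ^ 2) / n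

/-- `r_d² = (1/(n(n-1))) Σ_i Σ_j R_{ij}²`. -/
noncomputable def rdsq (n : ℕ) (R : Fin n → Fin n → ℝ) : ℝ :=
  (∑ i : Fin n, ∑ j : Fin n, (R i j) ^ 2) / ((n : ℝ) * ((n : ℝ) - 1))

/-- `A(t) = 2t(t-1)(n-t)(n-t-1)/((n-2)(n-3))`. -/
noncomputable def A (n t : ℕ) : ℝ :=
  2 * (t : ℝ) * ((t : ℝ) - 1) * ((n : ℝ) - t) * ((n : ℝ) - t - 1) /
    (((n : ℝ) - 2) * ((n : ℝ) - 3))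

/-- `B(t) = 4t(n-t)(t-1)(t-2)(n-1)/((n-2)(n-3))`. -/
noncomputable def B (n t : ℕ) : ℝ :=
  4 * (t : ℝ) * ((n : ℝ) - t) * ((t : ℝ) - 1) * ((t : ℝ) - 2) * ((n : ℝ) - 1) /
    (((n : ℝ) - 2) * ((n : ℝ) - 3))

/-- `U_diff^π = U1^π − U2^π`. -/
noncomputable def Udiff (n : ℕ) (R : Fin n → Fin n → ℝ) (π : Equiv.Perm (Fin n))
    (t1 t2 : ℕ) : ℝ :=
  U1 n R π t1 t2 - U2 n R π t1 t2

/-- `U_w^π = ((n−t2+t1−1)·U1^π + (t2−t1−1)·U2^π)/(n−2)`. -/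
noncomputable def Uw (n : ℕ) (R : Fin n → Fin n → ℝ) (π : Equiv.Perm (Fin n))
    (t1 t2 : ℕ) : ℝ :=
  (((n : ℝ) - t2 + t1 - 1) * U1 n R π t1 t2 + ((t2 : ℝ) - t1 - 1) * U2 n R π t1 t2) /
    ((n : ℝ) - 2)

/-- Standardized `Z_w^π(t1,t2)`. -/
noncomputable def Zw (n : ℕ) (R : Fin n → Fin n → ℝ) (π : Equiv.Perm (Fin n))
    (t1 t2 : ℕ) : ℝ :=
  (Uw n R π t1 t2 - pexp n (fun σ => Uw n R σ t1 t2)) /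
    Real.sqrt (pvar n (fun σ => Uw n R σ t1 t2))

/-- Standardized `Z_diff^π(t1,t2)`. -/
noncomputable def Zdiff (n : ℕ) (R : Fin n → Fin n → ℝ) (π : Equiv.Perm (Fin n))
    (t1 t2 : ℕ) : ℝ :=
  (Udiff n R π t1 t2 - pexp n (fun σ => Udiff n R σ t1 t2)) /
    Real.sqrt (pvar n (fun σ => Udiff n R σ t1 t2))

end RING

namespace Equiv.Perm

variable {α M : Type*} [DecidableEq α]

theorem exists_apply_eq_apply_eq {i j k l : α} (hij : i ≠ j) (hkl : k ≠ l) :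
    ∃ σ : Perm α, σ k = i ∧ σ l = j := by
  set τ : Perm α := swap k i
  have hτl : τ l ≠ i := fun h ↦ hkl (by rwa [swap_apply_eq_iff, swap_apply_right, eq_comm] at h)
  refine ⟨swap (τ l) j * τ, ?_, ?_⟩
  · simpa [τ] using swap_apply_of_ne_of_ne hτl.symm hij
  · simp

variable [Fintype α] [AddCommMonoid M]

theorem sum_apply_apply_eq_of_ne (f : α → α → M) {i j k l : α} (hij : i ≠ j) (hkl : k ≠ l) :
    ∑ π : Perm α, f (π i) (π j) = ∑ π : Perm α, f (π k) (π l) := by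
  obtain ⟨σ, hσk, hσl⟩ := exists_apply_eq_apply_eq hij hkl
  simpa [hσk, hσl] using Equiv.sum_comp (Equiv.mulRight σ) fun π : Perm α ↦ f (π k) (π l)

theorem sum_sum_sum_apply_apply (f : α → α → M) :
    ∑ k, ∑ l, ∑ π : Perm α, f (π k) (π l) = (Fintype.card α).factorial • ∑ a, ∑ b, f a b := by
  calc ∑ k, ∑ l, ∑ π : Perm α, f (π k) (π l)
      = ∑ π : Perm α, ∑ k, ∑ l, f (π k) (π l) :=
        (Finset.sum_congr rfl fun _ _ ↦ Finset.sum_comm).trans Finset.sum_comm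
    _ = ∑ _π : Perm α, ∑ a, ∑ b, f a b := by
        refine Finset.sum_congr rfl fun π _ ↦ ?_
        rw [Equiv.sum_comp π fun a ↦ ∑ l, f a (π l)]
        exact Finset.sum_congr rfl fun a _ ↦ Equiv.sum_comp π (f a)
    _ = (Fintype.card α).factorial • ∑ a, ∑ b, f a b := by
        rw [Finset.sum_const, Finset.card_univ, Fintype.card_perm]

end Equiv.Perm

theorem Finset.sum_sum_ite_eq_zero_const {α β : Type*} [DecidableEq α] [Ring β]
    (s : Finset α) (c : β) :
    ∑ i ∈ s, ∑ j ∈ s, (if i = j then 0 else c) = (#s : β) * ((#s : β) - 1) * c := by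
  have hrow : ∀ i ∈ s, ∑ j ∈ s, (if i = j then 0 else c) = ((#s : β) - 1) * c := by
    intro i hi
    rw [Finset.sum_ite, Finset.sum_const_zero, zero_add, Finset.sum_const, nsmul_eq_mul,
      Finset.filter_ne, Finset.card_erase_of_mem hi, Nat.cast_pred (Finset.card_pos.2 ⟨i, hi⟩)]
  rw [Finset.sum_congr rfl hrow, Finset.sum_const, nsmul_eq_mul, mul_assoc]

namespace RING

open Equiv

variable {n : ℕ}

theorem pexp_add (f g : Perm (Fin n) → ℝ) :
    pexp n (fun π ↦ f π + g π) = pexp n f + pexp n g := by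
  simp only [pexp, Finset.sum_add_distrib, add_div]

theorem pexp_sub (f g : Perm (Fin n) → ℝ) :
    pexp n (fun π ↦ f π - g π) = pexp n f - pexp n g := by
  simp only [pexp, Finset.sum_sub_distrib, sub_div]

theorem pexp_const_mul (c : ℝ) (f : Perm (Fin n) → ℝ) :
    pexp n (fun π ↦ c * f π) = c * pexp n f := by
  simp only [pexp, ← Finset.mul_sum, mul_div_assoc]

theorem pexp_div_const (c : ℝ) (f : Perm (Fin n) → ℝ) :
    pexp n (fun π ↦ f π / c) = pexp n f / c := by
  simp only [pexp, ← Finset.sum_div, div_right_comm]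

theorem pexp_sum {ι : Type*} (s : Finset ι) (f : ι → Perm (Fin n) → ℝ) :
    pexp n (fun π ↦ ∑ i ∈ s, f i π) = ∑ i ∈ s, pexp n (f i) := by
  simp only [pexp, Finset.sum_comm (s := Finset.univ) (t := s), Finset.sum_div]

theorem r0_eq (R : Fin n → Fin n → ℝ) :
    r0 n R = (∑ i, ∑ j, R i j) / ((n : ℝ) * ((n : ℝ) - 1)) := by
  unfold r0 Rbar
  rw [← Finset.sum_div, div_div, mul_comm]

variable {R : Fin n → Fin n → ℝ}

theorem pexp_apply_apply_of_ne (hdiag : ∀ i, R i i = 0) {k l : Fin n} (hkl : k ≠ l) :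
    pexp n (fun π ↦ R (π k) (π l)) = r0 n R := by
  set C := ∑ π : Perm (Fin n), R (π k) (π l)
  have hval : ∀ a b : Fin n, ∑ π : Perm (Fin n), R (π a) (π b) = if a = b then 0 else C := by
    intro a b
    split_ifs with hab
    · simp [hab, hdiag]
    · exact Perm.sum_apply_apply_eq_of_ne R hab hkl
  -- double counting over all pairs `(a, b)`: each of the `n (n - 1)` off-diagonal ones gives `C`
  have hcount : (n : ℝ) * ((n : ℝ) - 1) * C = n.factorial * ∑ a, ∑ b, R a b := by
    simpa only [hval, Finset.sum_sum_ite_eq_zero_const, Finset.card_univ, Fintype.card_fin,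
      nsmul_eq_mul] using Perm.sum_sum_sum_apply_apply R
  have hn : (n : ℝ) * ((n : ℝ) - 1) ≠ 0 := by
    have h1n : 1 < n := by simpa using Fintype.one_lt_card_iff.2 ⟨k, l, hkl⟩
    have : (1 : ℝ) < n := by exact_mod_cast h1n
    exact mul_ne_zero (by linarith) (by linarith)
  rw [pexp, r0_eq, div_eq_div_iff (by positivity) hn]
  linear_combination hcount

theorem pexp_sum_sum (hdiag : ∀ i, R i i = 0) (s : Finset (Fin n)) :
    pexp n (fun π ↦ ∑ i ∈ s, ∑ j ∈ s, R (π i) (π j)) = #s * ((#s : ℝ) - 1) * r0 n R := by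
  have hval : ∀ i j : Fin n, pexp n (fun π ↦ R (π i) (π j)) = if i = j then 0 else r0 n R := by
    intro i j
    split_ifs with hij
    · simp [hij, hdiag, pexp]
    · exact pexp_apply_apply_of_ne hdiag hij
  simp only [pexp_sum, hval, Finset.sum_sum_ite_eq_zero_const]

def window (n t1 t2 : ℕ) : Finset (Fin n) :=
  Finset.univ.filter fun i ↦ t1 ≤ (i : ℕ) ∧ (i : ℕ) < t2

theorem card_window {t1 t2 : ℕ} (h2n : t2 ≤ n) :
    #(window n t1 t2) = t2 - t1 := by
  have hlt : ∀ m ∈ Finset.Ico t1 t2, m < n := fun m hm ↦ (Finset.mem_Ico.1 hm).2.trans_le h2n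
  have : window n t1 t2 = (Finset.Ico t1 t2).attachFin hlt := by
    ext i; simp [window]
  rw [this, Finset.card_attachFin, Nat.card_Ico]

theorem U1_eq_sum_sum_window (π : Perm (Fin n)) (t1 t2 : ℕ) :
    U1 n R π t1 t2 = ∑ i ∈ window n t1 t2, ∑ j ∈ window n t1 t2, R (π i) (π j) := by
  simp only [U1, window, Finset.sum_filter, ite_and, Finset.sum_ite_irrel, Finset.sum_const_zero]

theorem U2_eq_sum_sum_compl_window (π : Perm (Fin n)) (t1 t2 : ℕ) :
    U2 n R π t1 t2 = ∑ i ∈ (window n t1 t2)ᶜ, ∑ j ∈ (window n t1 t2)ᶜ, R (π i) (π j) := by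
  simp only [U2, window, Finset.compl_filter, Finset.sum_filter, ite_and, Finset.sum_ite_irrel,
    Finset.sum_const_zero, not_and_or, not_le, not_lt]

end RING

open RING

theorem stmt5_general (n : ℕ) (R : Fin n → Fin n → ℝ)
    (hdiag : ∀ i, R i i = 0)
    (t1 t2 : ℕ) (h12 : t1 < t2) (h2n : t2 ≤ n) :
    pexp n (fun π => Uw n R π t1 t2)
        = (n : ℝ) * ((t2 : ℝ) - t1 - 1) * ((n : ℝ) - t2 + t1 - 1) * r0 n R / ((n : ℝ) - 2)
      ∧ pexp n (fun π => Udiff n R π t1 t2)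
        = ((n : ℝ) - 1) * (2 * ((t2 : ℝ) - t1) - n) * r0 n R := by
  have hcard : (#(window n t1 t2) : ℝ) = t2 - t1 := by
    rw [card_window h2n, Nat.cast_sub h12.le]
  have hcard_compl : (#(window n t1 t2)ᶜ : ℝ) = n - t2 + t1 := by
    have hsum : (#(window n t1 t2)ᶜ + #(window n t1 t2) : ℝ) = n := by
      exact_mod_cast (Finset.card_compl_add_card (window n t1 t2)).trans (Fintype.card_fin n)
    linarith
  have hU1 : pexp n (fun π ↦ U1 n R π t1 t2) = (t2 - t1) * ((t2 - t1) - 1) * r0 n R := by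
    simp only [U1_eq_sum_sum_window, pexp_sum_sum hdiag, hcard]
  have hU2 : pexp n (fun π ↦ U2 n R π t1 t2)
      = (n - t2 + t1) * ((n - t2 + t1) - 1) * r0 n R := by
    simp only [U2_eq_sum_sum_compl_window, pexp_sum_sum hdiag, hcard_compl]
  constructor
  · simp only [Uw, pexp_div_const, pexp_add, pexp_const_mul, hU1, hU2]
    ring
  · simp only [Udiff, pexp_sub, hU1, hU2]
    ring

/-- Under the permutation null distribution, for all integers `0 ≤ t1 < t2 ≤ n`,
`𝔼[U_w^π(t1,t2)] = n(t2 − t1 − 1)(n − t2 + t1 − 1)·r0/(n−2)` and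
`𝔼[U_diff^π(t1,t2)] = (n−1)(2(t2 − t1) − n)·r0`. -/
theorem stmt5 (n : ℕ) (hn : 4 ≤ n) (R : Fin n → Fin n → ℝ)
    (hsym : ∀ i j, R i j = R j i) (hdiag : ∀ i, R i i = 0)
    (t1 t2 : ℕ) (h12 : t1 < t2) (h2n : t2 ≤ n) :
    pexp n (fun π => Uw n R π t1 t2)
        = (n : ℝ) * ((t2 : ℝ) - t1 - 1) * ((n : ℝ) - t2 + t1 - 1) * r0 n R / ((n : ℝ) - 2)
      ∧ pexp n (fun π => Udiff n R π t1 t2)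
        = ((n : ℝ) - 1) * (2 * ((t2 : ℝ) - t1) - n) * r0 n R :=
  stmt5_general n R hdiag t1 t2 h12 h2n
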